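/- Fix an integer n with 2 ≤ n ≤ k and 1 ≤ r ≤ m+1, and consider the smooth vector fields on (ℝ^{m+1})^{k+1} given by W_r(x) = (x_n^r − x_{n−1}^r)·Y_n(x) + e_r^{(n)} and Y_n. Then their Lie bracket (defined by [X, Y](x) = DY(x)[X(x)] − DX(x)[Y(x)]) satisfies, at every x ∈ (ℝ^{m+1})^{k+1}: [W_r, Y_n](x) = (x_n^r − x_{n−1}^r)·Y_n(x) + (x_{n−1}^r − x_{n−2}^r)·Y_{n−1}(x) + e_r^{(n−1)}. -/

import Mathlib

/-!
Write `n = p + 2` and `W = f • Y_n + e_r^{(n)}` with `f y = y_n^r - y_{n-1}^r` linear. Then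
`DW = f x • DY_n + Df ⊗ Y_n(x)`, so in `[W, Y_n](x)` the terms `f x • DY_n (Y_n x)` cancel and
`DY_n (e_r^{(n)}) - f (Y_n x) • Y_n x` is left. The components `n - 1` and `n` of `Y_n(x)` are
`x_n - x_{n-1}` and `0`, whence `f (Y_n x) = -(x_n^r - x_{n-1}^r)`. Finally
`Y_n = A_{n-1} Y_{n-1} + Z_{n-1}`, and moving `x_n` along `e_r` by `t` fixes `Y_{n-1}`, adds
`t (x_{n-1}^r - x_{n-2}^r)` to `A_{n-1}` and `t e_r^{(n-1)}` to `Z_{n-1}`: `Y_n` is affine along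
that line, with slope `(x_{n-1}^r - x_{n-2}^r) Y_{n-1} + e_r^{(n-1)}`.
-/

noncomputable section

open scoped RealInnerProductSpace

namespace ArticulatedArm

/-- `ℝ^{m+1}` with the Euclidean structure. -/
abbrev Vec (m : ℕ) : Type := EuclideanSpace ℝ (Fin (m + 1))

/-- `(ℝ^{m+1})^{k+1}` with the Euclidean (product) structure. -/
abbrev Tup (m k : ℕ) : Type := PiLp 2 (fun _ : Fin (k + 1) => Vec m)

open Fin.NatCast in
/-- The segment vector `x_{i+1} - x_i`. -/
def seg (m k : ℕ) (x : Tup m k) (i : ℕ) : Vec m :=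
  x ((i + 1 : ℕ) : Fin (k + 1)) - x ((i : ℕ) : Fin (k + 1))

/-- The configuration space `C^k(m)`. -/
def Conf (m k : ℕ) : Set (Tup m k) := {x | ∀ i, i < k → ‖seg m k x i‖ = 1}

/-- `A_{i,j}(x) = ⟨x_{i+1} - x_i, x_{j+1} - x_j⟩`. -/
def AA (m k : ℕ) (x : Tup m k) (i j : ℕ) : ℝ := ⟪seg m k x i, seg m k x j⟫

/-- `A_i(x) = A_{i,i-1}(x)`. -/
def Acoef (m k : ℕ) (x : Tup m k) (i : ℕ) : ℝ := AA m k x i (i - 1)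

/-- `Z_i(x)`: the tuple whose `i`-th component is `x_{i+1} - x_i` and the others `0`. -/
def Zt (m k : ℕ) (x : Tup m k) (i : ℕ) : Tup m k :=
  WithLp.toLp 2 (fun l : Fin (k + 1) => if (l : ℕ) = i then seg m k x i else 0)

/-- `N_i(x)`: the tuple with `i`-th component `-(x_{i+1} - x_i)`, `(i+1)`-th component
`x_{i+1} - x_i`, and the others `0`. -/
def Nt (m k : ℕ) (x : Tup m k) (i : ℕ) : Tup m k :=
  WithLp.toLp 2 (fun l : Fin (k + 1) => if (l : ℕ) = i then -(seg m k x i)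
    else if (l : ℕ) = i + 1 then seg m k x i else 0)

/-- `Y_n(x) = Σ_{i=0}^{n-1} (Π_{j=i+1}^{n-1} A_j(x)) Z_i(x)`. -/
def Yt (m k : ℕ) (x : Tup m k) (n : ℕ) : Tup m k :=
  ∑ i ∈ Finset.range n, (∏ j ∈ Finset.Ico (i + 1) n, Acoef m k x j) • Zt m k x i

/-- `Ψ_i(x) = ‖x_{i+1} - x_i‖² - 1`. -/
def Psi (m k : ℕ) (i : ℕ) (x : Tup m k) : ℝ := ‖seg m k x i‖ ^ 2 - 1

/-- `e_r^{(i)}`: the tuple whose `i`-th component is the `r`-th standard basis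
vector of `ℝ^{m+1}` and whose other components are `0`. -/
def et (m k : ℕ) (i : ℕ) (r : Fin (m + 1)) : Tup m k :=
  WithLp.toLp 2 (fun l : Fin (k + 1) => if (l : ℕ) = i then EuclideanSpace.single r (1 : ℝ) else 0)

end ArticulatedArm

section LieBracket

variable {𝕜 E F : Type*} [NontriviallyNormedField 𝕜]
  [NormedAddCommGroup E] [NormedSpace 𝕜 E] [NormedAddCommGroup F] [NormedSpace 𝕜 F]

theorem HasFDerivAt.apply_eq_of_forall_add_smul {Y : E → F} {DY : E →L[𝕜] F} {x v : E}
    {w : F} (hY : HasFDerivAt Y DY x) (hline : ∀ t : 𝕜, Y (x + t • v) = Y x + t • w) :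
    DY v = w := by
  have hw : HasLineDerivAt 𝕜 Y w x v := by
    unfold HasLineDerivAt
    simpa only [hline, one_smul] using
      ((hasDerivAt_id' (0 : 𝕜)).smul_const w).const_add (Y x)
  exact (hY.hasLineDerivAt v).unique hw

theorem HasFDerivAt.exists_lieBracket_smul_add_const {Y : E → E} {DY : E →L[𝕜] E} {x : E}
    (hY : HasFDerivAt Y DY x) (f : E →L[𝕜] 𝕜) (c : E) :
    ∃ DW : E →L[𝕜] E, HasFDerivAt (fun y => f y • Y y + c) DW x ∧
      DY (f x • Y x + c) - DW (Y x) = DY c - f (Y x) • Y x := by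
  refine ⟨f x • DY + f.smulRight (Y x), (f.hasFDerivAt.smul hY).add_const c, ?_⟩
  simp only [map_add, map_smul, add_apply, smul_apply, ContinuousLinearMap.smulRight_apply]
  abel

end LieBracket

namespace ArticulatedArm

variable {m k : ℕ}

open Fin.NatCast

def segL (m k : ℕ) (i : ℕ) : Tup m k →L[ℝ] Vec m :=
  PiLp.proj (𝕜 := ℝ) 2 (fun _ => Vec m) ((i + 1 : ℕ) : Fin (k + 1))
    - PiLp.proj 2 (fun _ => Vec m) ((i : ℕ) : Fin (k + 1))

@[simp] theorem segL_apply (i : ℕ) (y : Tup m k) : segL m k i y = seg m k y i := rfl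

theorem differentiable_Yt (n : ℕ) : Differentiable ℝ fun y : Tup m k => Yt m k y n := by
  have hseg (i : ℕ) : Differentiable ℝ fun y : Tup m k => seg m k y i :=
    (segL m k i).differentiable
  have hZ (i : ℕ) : Differentiable ℝ fun y : Tup m k => Zt m k y i := by
    rw [differentiable_piLp]
    intro l
    by_cases h : (l : ℕ) = i
    · simpa [Zt, h] using hseg i
    · simp [Zt, h]
  have hA (j : ℕ) : Differentiable ℝ fun y : Tup m k => Acoef m k y j :=
    (hseg j).inner ℝ (hseg (j - 1))
  have hP (i : ℕ) :
      Differentiable ℝ fun y : Tup m k => ∏ j ∈ Finset.Ico (i + 1) n, Acoef m k y j :=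
    fun y => (HasFDerivAt.finsetProd fun j _ => (hA j y).hasFDerivAt).differentiableAt
  exact Differentiable.fun_sum fun i _ => (hP i).fun_smul (hZ i)

theorem seg_add_smul (x v : Tup m k) (t : ℝ) (j : ℕ) :
    seg m k (x + t • v) j = seg m k x j + t • seg m k v j := by
  simp only [← segL_apply, map_add, map_smul]

theorem Zt_add_smul (x v : Tup m k) (t : ℝ) (i : ℕ) :
    Zt m k (x + t • v) i = Zt m k x i + t • Zt m k v i := by
  ext l : 1
  by_cases h : (l : ℕ) = i <;> simp [Zt, h, seg_add_smul]

theorem Yt_succ (x : Tup m k) (n : ℕ) :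
    Yt m k x (n + 1) = Acoef m k x n • Yt m k x n + Zt m k x n := by
  rw [Yt, Finset.sum_range_succ, Finset.Ico_self, Finset.prod_empty, one_smul, Yt,
    Finset.smul_sum]
  congr 1
  refine Finset.sum_congr rfl fun i hi => ?_
  rw [Finset.prod_Ico_succ_top (by simp at hi; omega), mul_comm, mul_smul]

theorem Yt_congr {x y : Tup m k} {n : ℕ} (h : ∀ j < n, seg m k y j = seg m k x j) :
    Yt m k y n = Yt m k x n := by
  refine Finset.sum_congr rfl fun i hi => ?_
  rw [Finset.mem_range] at hi
  have hZ : Zt m k y i = Zt m k x i := by simp only [Zt, h i hi]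
  have hA : ∀ j ∈ Finset.Ico (i + 1) n, Acoef m k y j = Acoef m k x j := by
    intro j hj
    rw [Finset.mem_Ico] at hj
    simp only [Acoef, AA, h j (by omega), h (j - 1) (by omega)]
  rw [Finset.prod_congr rfl hA, hZ]

theorem Yt_apply_of_le (x : Tup m k) {n : ℕ} {l : Fin (k + 1)} (h : n ≤ l) :
    Yt m k x n l = 0 := by
  rw [Yt, WithLp.ofLp_sum, Finset.sum_apply]
  refine Finset.sum_eq_zero fun i hi => ?_
  rw [Finset.mem_range] at hi
  simp [Zt, show (l : ℕ) ≠ i by omega]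

theorem seg_Yt_succ (x : Tup m k) {j : ℕ} (hj : j + 1 ≤ k) :
    seg m k (Yt m k x (j + 1)) j = -seg m k x j := by
  have hvj : ((j : ℕ) : Fin (k + 1)).val = j := Fin.val_cast_of_lt (by omega)
  have hvj1 : ((j + 1 : ℕ) : Fin (k + 1)).val = j + 1 := Fin.val_cast_of_lt (by omega)
  rw [seg, Yt_apply_of_le x hvj1.ge, Yt_succ, PiLp.add_apply, PiLp.smul_apply,
    Yt_apply_of_le x hvj.ge]
  simp [Zt, hvj]

theorem et_apply_natCast (n : ℕ) (r : Fin (m + 1)) {i : ℕ} (hi : i ≤ k) :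
    et m k n r (i : Fin (k + 1)) = if i = n then EuclideanSpace.single r 1 else 0 := by
  simp [et, Fin.val_cast_of_lt (Nat.lt_succ_of_le hi)]

theorem seg_et_of_succ_lt {n j : ℕ} (r : Fin (m + 1)) (hn : n ≤ k) (hj : j + 1 < n) :
    seg m k (et m k n r) j = 0 := by
  rw [seg, et_apply_natCast _ _ (by omega), et_apply_natCast _ _ (by omega),
    if_neg (by omega), if_neg (by omega), sub_zero]

theorem seg_et_self {j : ℕ} (r : Fin (m + 1)) (hj : j + 1 ≤ k) :
    seg m k (et m k (j + 1) r) j = EuclideanSpace.single r 1 := by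
  rw [seg, et_apply_natCast _ _ hj, et_apply_natCast _ _ (by omega),
    if_pos rfl, if_neg (by omega), sub_zero]

theorem Zt_et_self {j : ℕ} (r : Fin (m + 1)) (hj : j + 1 ≤ k) :
    Zt m k (et m k (j + 1) r) j = et m k j r := by
  ext l : 1
  simp only [Zt, PiLp.toLp_apply, seg_et_self r hj]
  rfl

theorem Yt_add_smul_et (x : Tup m k) {p : ℕ} (r : Fin (m + 1)) (hp : p + 2 ≤ k) (t : ℝ) :
    Yt m k (x + t • et m k (p + 2) r) (p + 2)
      = Yt m k x (p + 2) + t • (seg m k x p r • Yt m k x (p + 1) + et m k (p + 1) r) := by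
  set y := x + t • et m k (p + 2) r
  have hlow : ∀ j < p + 1, seg m k y j = seg m k x j := fun j hj => by
    rw [seg_add_smul, seg_et_of_succ_lt r hp (by omega), smul_zero, add_zero]
  have htop : seg m k y (p + 1) = seg m k x (p + 1) + t • EuclideanSpace.single r 1 := by
    rw [seg_add_smul, seg_et_self r hp]
  have hA : Acoef m k y (p + 1) = Acoef m k x (p + 1) + t * seg m k x p r := by
    simp only [Acoef, AA, Nat.add_sub_cancel, htop, hlow p (by omega), inner_add_left,
      inner_smul_left, EuclideanSpace.inner_single_left]
    simp
  rw [Yt_succ y, Yt_succ x, Yt_congr hlow, hA, Zt_add_smul, Zt_et_self r hp]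
  module

theorem statement16_general (m k : ℕ) (n : ℕ) (hn2 : 2 ≤ n)
    (hnk : n ≤ k) (r : Fin (m + 1)) (x : Tup m k) :
    let W : Tup m k → Tup m k := fun y => (seg m k y (n - 1) r) • Yt m k y n + et m k n r
    ∃ DW DY : Tup m k →L[ℝ] Tup m k,
      HasFDerivAt W DW x ∧ HasFDerivAt (fun y : Tup m k => Yt m k y n) DY x ∧
      DY (W x) - DW (Yt m k x n) =
        (seg m k x (n - 1) r) • Yt m k x n + (seg m k x (n - 2) r) • Yt m k x (n - 1)
          + et m k (n - 1) r := by
  obtain ⟨p, rfl⟩ : ∃ p, n = p + 2 := ⟨n - 2, by omega⟩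
  set f : Tup m k →L[ℝ] ℝ := (EuclideanSpace.proj r).comp (segL m k (p + 1))
  have hY := (differentiable_Yt (m := m) (k := k) (p + 2) x).hasFDerivAt
  obtain ⟨DW, hW, hbracket⟩ := hY.exists_lieBracket_smul_add_const f (et m k (p + 2) r)
  refine ⟨DW, _, hW, hY, hbracket.trans ?_⟩
  have hfY : f (Yt m k x (p + 2)) = -seg m k x (p + 1) r := by
    simp only [f, ContinuousLinearMap.comp_apply, segL_apply, seg_Yt_succ x hnk]
    rfl
  rw [hY.apply_eq_of_forall_add_smul (Yt_add_smul_et x r hnk), hfY, neg_smul, sub_neg_eq_add]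
  show _ = seg m k x (p + 1) r • Yt m k x (p + 2) + seg m k x p r • Yt m k x (p + 1)
    + et m k (p + 1) r
  abel

/-- for `2 ≤ n ≤ k` and the vector fields
`W_r(x) = (x_n^r - x_{n-1}^r)·Y_n(x) + e_r^{(n)}` and `Y_n`, the Lie bracket
`[W_r, Y_n](x) = DY_n(x)[W_r(x)] - DW_r(x)[Y_n(x)]` equals
`(x_n^r - x_{n-1}^r)·Y_n(x) + (x_{n-1}^r - x_{n-2}^r)·Y_{n-1}(x) + e_r^{(n-1)}`. -/
theorem statement16 (m k : ℕ) (hm : 2 ≤ m) (hk : 2 ≤ k) (n : ℕ) (hn2 : 2 ≤ n)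
    (hnk : n ≤ k) (r : Fin (m + 1)) (x : Tup m k) :
    let W : Tup m k → Tup m k := fun y => (seg m k y (n - 1) r) • Yt m k y n + et m k n r
    ∃ DW DY : Tup m k →L[ℝ] Tup m k,
      HasFDerivAt W DW x ∧ HasFDerivAt (fun y : Tup m k => Yt m k y n) DY x ∧
      DY (W x) - DW (Yt m k x n) =
        (seg m k x (n - 1) r) • Yt m k x n + (seg m k x (n - 2) r) • Yt m k x (n - 1)
          + et m k (n - 1) r :=
  statement16_general m k n hn2 hnk r x

end ArticulatedArm
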